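/- arXiv:1605.01068 — 2 statements merged into one kernel-verified Lean document; each statement's English description precedes it below -/
import Mathlib

section
/- Let d ≥ 2 divide n and let f_d(n) be the number of permutations in S_n all of whose cycle lengths are divisible by d. Then f_d(n) = (n-1)! · ∏_{j=1}^{n/d - 1} (1 + 1/(jd)). -/
/-- `fd d n` is the number of permutations of `n` points all of whose cycle
lengths (including fixed points, which are cycles of length 1) are divisible
by `d`. -/
noncomputable def fd (d n : ℕ) : ℕ :=
  Nat.card {π : Equiv.Perm (Fin n) // ∀ x, d ∣ Function.minimalPeriod (⇑π) x}

/-!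
Call a permutation rooted at a point `a` admissible if every cycle avoiding `a` has length
divisible by `d`, and record the length of the cycle through `a` modulo `d`. Removing the root
`none` of a permutation of `Option α` (`Equiv.Perm.decomposeOption`) either deletes a fixed point,
or shortens the cycle through some `a : α` by one and makes `a` the new root. So an admissible
permutation of `n + 2` points whose root cycle has length `≡ n + 2` is either a fixed root next to
a permutation counted by `f_d (n + 1)` (possible only when `d ∣ n + 1`), or one of `n + 1`
insertions into an admissible permutation of `n + 1` points whose root cycle has length
`≡ n + 1`. When `d ∣ n + 1` the latter count is `f_d (n + 1)` itself, so it equals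
`∏_{k ≤ n} (k + [d ∣ k])`; writing `k + 1 = k (1 + 1 / k)` at the multiples `k = j d` gives the
formula.
-/

open Equiv Function Finset

theorem Function.minimalPeriod_eq_of_iterate_apply {α β : Type*} {f : α → α} {g : β → β}
    {e : α → β} (he : Injective e) {x : α} (h : ∀ n, g^[n] (e x) = e (f^[n] x)) :
    minimalPeriod g (e x) = minimalPeriod f x :=
  minimalPeriod_eq_minimalPeriod_iff.mpr fun n => by
    simp only [IsPeriodicPt, IsFixedPt, h, he.eq_iff]

namespace Equiv.Perm

variable {α β : Type*}

theorem minimalPeriod_permCongr (e : α ≃ β) (π : Perm α) (x : α) :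
    minimalPeriod (e.permCongr π) (e x) = minimalPeriod π x := by
  have h : Semiconj e π (e.permCongr π) := fun y => by simp [permCongr_apply]
  exact minimalPeriod_eq_of_iterate_apply e.injective fun n => ((h.iterate_right n) x).symm

theorem sameCycle_permCongr (e : α ≃ β) (π : Perm α) (x y : α) :
    (e.permCongr π).SameCycle (e x) (e y) ↔ π.SameCycle x y := by
  have h (i : ℤ) : e.permCongr π ^ i = e.permCongr (π ^ i) := by
    rw [← e.permCongrHom_coe, map_zpow]
  simp only [SameCycle, h, permCongr_apply, symm_apply_apply, e.injective.eq_iff]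

theorem SameCycle.minimalPeriod_eq [Finite α] {π : Perm α} {x y : α} (h : π.SameCycle x y) :
    minimalPeriod π y = minimalPeriod π x := by
  obtain ⟨i, -, rfl⟩ := h.exists_pow_eq'
  rw [← iterate_eq_pow]
  exact minimalPeriod_apply_iterate (π.injective.mem_periodicPts x) i

theorem minimalPeriod_optionCongr_none (τ : Perm α) :
    minimalPeriod τ.optionCongr none = 1 :=
  minimalPeriod_eq_one_iff_isFixedPt.mpr rfl

theorem minimalPeriod_optionCongr_some (τ : Perm α) (x : α) :
    minimalPeriod τ.optionCongr (some x) = minimalPeriod τ x := by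
  have h : Semiconj some τ τ.optionCongr := fun _ => rfl
  exact minimalPeriod_eq_of_iterate_apply (Option.some_injective α)
    fun n => ((h.iterate_right n) x).symm

theorem not_sameCycle_optionCongr_none_some (τ : Perm α) (x : α) :
    ¬ SameCycle τ.optionCongr none (some x) := by
  rintro ⟨i, hi⟩
  rw [zpow_apply_eq_self_of_apply_eq_self rfl] at hi
  exact Option.some_ne_none x hi.symm

section insertion

variable [DecidableEq α]

theorem decomposeOption_symm_some_apply_none (a : α) (τ : Perm α) :
    decomposeOption.symm (some a, τ) none = some a := by
  simp

theorem decomposeOption_symm_some_apply_some (a : α) (τ : Perm α) (x : α) :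
    decomposeOption.symm (some a, τ) (some x) = if τ x = a then none else some (τ x) := by
  split_ifs with h <;> simp [h, swap_apply_of_ne_of_ne]

variable (a : α) (τ : Perm α)

theorem iterate_decomposeOption_symm_some_of_not_sameCycle {x : α} (hx : ¬ τ.SameCycle x a)
    (n : ℕ) : (decomposeOption.symm (some a, τ))^[n] (some x) = some (τ^[n] x) := by
  induction n with
  | zero => rfl
  | succ n ih =>
    rw [iterate_succ_apply', ih, decomposeOption_symm_some_apply_some, if_neg, iterate_succ_apply']
    intro h
    exact hx ⟨(n + 1 : ℕ), by rw [zpow_natCast, ← iterate_eq_pow, iterate_succ_apply', h]⟩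

theorem minimalPeriod_decomposeOption_symm_some_of_not_sameCycle {x : α}
    (hx : ¬ τ.SameCycle x a) :
    minimalPeriod (decomposeOption.symm (some a, τ)) (some x) = minimalPeriod τ x :=
  minimalPeriod_eq_of_iterate_apply (Option.some_injective α)
    (iterate_decomposeOption_symm_some_of_not_sameCycle a τ hx)

theorem iterate_succ_decomposeOption_symm_some_none {k : ℕ} (hk : k < minimalPeriod τ a) :
    (decomposeOption.symm (some a, τ))^[k + 1] none = some (τ^[k] a) := by
  induction k with
  | zero => exact decomposeOption_symm_some_apply_none a τ
  | succ k ih =>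
    rw [iterate_succ_apply', ih (by omega), decomposeOption_symm_some_apply_some, if_neg,
      iterate_succ_apply']
    rw [← iterate_succ_apply' τ]
    exact not_isPeriodicPt_of_pos_of_lt_minimalPeriod k.succ_ne_zero hk

theorem sameCycle_of_iterate_decomposeOption_symm_some_none {x : α} {n : ℕ}
    (h : (decomposeOption.symm (some a, τ))^[n] none = some x) : τ.SameCycle a x := by
  induction n generalizing x with
  | zero => exact absurd h (Option.some_ne_none x).symm
  | succ n ih =>
    rw [iterate_succ_apply'] at h
    cases hn : (decomposeOption.symm (some a, τ))^[n] none with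
    | none =>
      rw [hn, decomposeOption_symm_some_apply_none, Option.some_inj] at h
      exact h ▸ SameCycle.refl τ a
    | some y =>
      rw [hn, decomposeOption_symm_some_apply_some] at h
      split_ifs at h
      rw [Option.some_inj] at h
      exact h ▸ sameCycle_apply_right.mpr (ih hn)

variable [Finite α]

theorem minimalPeriod_decomposeOption_symm_some_none :
    minimalPeriod (decomposeOption.symm (some a, τ)) none = minimalPeriod τ a + 1 := by
  set σ := decomposeOption.symm (some a, τ)
  obtain ⟨k, hk⟩ : ∃ k, minimalPeriod τ a = k + 1 := Nat.exists_eq_add_one.mpr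
    (minimalPeriod_pos_of_mem_periodicPts (τ.injective.mem_periodicPts a))
  have hσ : IsPeriodicPt σ (minimalPeriod τ a + 1) none := by
    rw [IsPeriodicPt, IsFixedPt, iterate_succ_apply', hk,
      iterate_succ_decomposeOption_symm_some_none a τ (by omega),
      decomposeOption_symm_some_apply_some, if_pos]
    rw [← iterate_succ_apply' τ, Nat.succ_eq_add_one, ← hk]
    exact iterate_minimalPeriod
  refine le_antisymm (hσ.minimalPeriod_le (Nat.succ_pos _)) (Nat.succ_le_of_lt ?_)
  by_contra! hle
  obtain ⟨j, hj⟩ : ∃ j, minimalPeriod σ none = j + 1 := Nat.exists_eq_add_one.mpr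
    (minimalPeriod_pos_of_mem_periodicPts (σ.injective.mem_periodicPts none))
  have h := iterate_succ_decomposeOption_symm_some_none a τ (show j < minimalPeriod τ a by omega)
  rw [← hj, iterate_minimalPeriod] at h
  exact Option.some_ne_none _ h.symm

theorem sameCycle_decomposeOption_symm_some_none {x : α} :
    (decomposeOption.symm (some a, τ)).SameCycle none (some x) ↔ τ.SameCycle a x := by
  constructor
  · intro h
    obtain ⟨n, -, hn⟩ := h.exists_pow_eq'
    exact sameCycle_of_iterate_decomposeOption_symm_some_none a τ (by rwa [iterate_eq_pow])
  · intro h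
    obtain ⟨n, -, rfl⟩ := h.exists_pow_eq'
    have hL := minimalPeriod_pos_of_mem_periodicPts (τ.injective.mem_periodicPts a)
    refine ⟨(n % minimalPeriod τ a + 1 : ℕ), ?_⟩
    rw [zpow_natCast, ← iterate_eq_pow, iterate_succ_decomposeOption_symm_some_none a τ
      (Nat.mod_lt n hL), iterate_mod_minimalPeriod_eq, iterate_eq_pow]

end insertion

def periodDvdPerms (d : ℕ) : Set (Perm α) :=
  {π | ∀ x, d ∣ minimalPeriod π x}

def rootedPeriodDvdPerms (d r : ℕ) (a : α) : Set (Perm α) :=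
  {π | (∀ x, ¬ π.SameCycle a x → d ∣ minimalPeriod π x) ∧ minimalPeriod π a ≡ r [MOD d]}

theorem rootedPeriodDvdPerms_congr {d r s : ℕ} (h : r ≡ s [MOD d]) (a : α) :
    rootedPeriodDvdPerms d r a = rootedPeriodDvdPerms d s a := by
  ext π
  exact and_congr_right' ⟨fun h' => h'.trans h, fun h' => h'.trans h.symm⟩

theorem rootedPeriodDvdPerms_zero [Finite α] (d : ℕ) (a : α) :
    rootedPeriodDvdPerms d 0 a = periodDvdPerms d := by
  ext π
  simp only [rootedPeriodDvdPerms, periodDvdPerms, Set.mem_ofPred_eq, Nat.modEq_zero_iff_dvd]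
  refine ⟨fun ⟨hoff, ha⟩ x => ?_, fun h => ⟨fun x _ => h x, h a⟩⟩
  by_cases hx : π.SameCycle a x
  · rwa [hx.minimalPeriod_eq]
  · exact hoff x hx

theorem card_rootedPeriodDvdPerms_permCongr (d r : ℕ) (e : α ≃ β) (a : α) :
    Nat.card (rootedPeriodDvdPerms d r (e a)) = Nat.card (rootedPeriodDvdPerms d r a) := by
  refine Nat.card_congr (e.permCongr.subtypeEquiv fun π => ?_).symm
  simp only [rootedPeriodDvdPerms, Set.mem_ofPred_eq, minimalPeriod_permCongr,
    ← e.forall_congr_right (q := fun y => ¬ _ → d ∣ minimalPeriod _ y), sameCycle_permCongr]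

section counting

variable [DecidableEq α]

theorem decomposeOption_symm_none_mem_rootedPeriodDvdPerms {d r : ℕ} (τ : Perm α) :
    decomposeOption.symm (none, τ) ∈ rootedPeriodDvdPerms d (r + 1) none ↔
      τ ∈ periodDvdPerms d ∧ d ∣ r := by
  have hσ : decomposeOption.symm (none, τ) = τ.optionCongr := by
    rw [decomposeOption_symm_apply, swap_self]
    rfl
  have hmod : 1 ≡ r + 1 [MOD d] ↔ d ∣ r := by
    simpa only [zero_add] using (Nat.ModEq.rfl.add_iff_right (a := 0) (b := r) (c := 1)).trans
      (Nat.ModEq.comm.trans Nat.modEq_zero_iff_dvd)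
  simp only [rootedPeriodDvdPerms, periodDvdPerms, Set.mem_ofPred_eq, hσ, Option.forall,
    SameCycle.refl, not_true_eq_false, false_imp_iff, not_sameCycle_optionCongr_none_some,
    not_false_eq_true, true_imp_iff, minimalPeriod_optionCongr_some,
    minimalPeriod_optionCongr_none, true_and, hmod]

theorem decomposeOption_symm_some_mem_rootedPeriodDvdPerms [Finite α] {d r : ℕ} (a : α)
    (τ : Perm α) :
    decomposeOption.symm (some a, τ) ∈ rootedPeriodDvdPerms d (r + 1) none ↔
      τ ∈ rootedPeriodDvdPerms d r a := by
  simp only [rootedPeriodDvdPerms, Set.mem_ofPred_eq, Option.forall, SameCycle.refl,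
    not_true_eq_false, false_imp_iff, sameCycle_decomposeOption_symm_some_none,
    minimalPeriod_decomposeOption_symm_some_none, Nat.ModEq.rfl.add_iff_right, true_and]
  refine and_congr_left' (forall_congr' fun x => imp_congr_right fun hx => ?_)
  rw [minimalPeriod_decomposeOption_symm_some_of_not_sameCycle a τ fun h => hx h.symm]

theorem card_rootedPeriodDvdPerms_none [Fintype α] (d r : ℕ) :
    Nat.card (rootedPeriodDvdPerms d (r + 1) (none : Option α)) =
      (if d ∣ r then Nat.card (periodDvdPerms d : Set (Perm α)) else 0) +
        ∑ a : α, Nat.card (rootedPeriodDvdPerms d r a) := by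
  set S := rootedPeriodDvdPerms d (r + 1) (none : Option α)
  have hsplit : Nat.card S =
      ∑ s : Option α, Nat.card {τ : Perm α // decomposeOption.symm (s, τ) ∈ S} := by
    rw [← Nat.card_sigma]
    exact Nat.card_congr ((decomposeOption.subtypeEquiv fun π => by simp).trans
      (subtypeProdEquivSigmaSubtype fun s τ => decomposeOption.symm (s, τ) ∈ S))
  rw [hsplit, Fintype.sum_option]
  congr 1
  · simp_rw [S, decomposeOption_symm_none_mem_rootedPeriodDvdPerms]
    split_ifs with h <;> simp [h]
  · simp_rw [S, decomposeOption_symm_some_mem_rootedPeriodDvdPerms]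

end counting

end Equiv.Perm

open Equiv.Perm

theorem fd_zero (d : ℕ) : fd d 0 = 1 := by
  simp [fd]

theorem fd_succ_eq_card_rootedPeriodDvdPerms (d n : ℕ) :
    fd d (n + 1) = Nat.card (rootedPeriodDvdPerms d 0 (0 : Fin (n + 1))) := by
  rw [rootedPeriodDvdPerms_zero]
  rfl

theorem card_rootedPeriodDvdPerms_fin_succ (d r n : ℕ) :
    Nat.card (rootedPeriodDvdPerms d (r + 1) (0 : Fin (n + 2))) =
      (if d ∣ r then fd d (n + 1) else 0) +
        (n + 1) * Nat.card (rootedPeriodDvdPerms d r (0 : Fin (n + 1))) := by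
  have hswap (a : Fin (n + 1)) : Nat.card (rootedPeriodDvdPerms d r a) =
      Nat.card (rootedPeriodDvdPerms d r (0 : Fin (n + 1))) := by
    rw [← card_rootedPeriodDvdPerms_permCongr d r (swap 0 a) 0, swap_apply_left]
  rw [← card_rootedPeriodDvdPerms_permCongr d (r + 1) (finSuccEquiv (n + 1)), finSuccEquiv_zero,
    card_rootedPeriodDvdPerms_none, Finset.sum_congr rfl fun a _ => hswap a, sum_const,
    card_univ, Fintype.card_fin, smul_eq_mul]
  rfl

theorem card_rootedPeriodDvdPerms_fin_self (d n : ℕ) :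
    Nat.card (rootedPeriodDvdPerms d (n + 1) (0 : Fin (n + 1))) =
      ∏ k ∈ range (n + 1), (k + if d ∣ k then 1 else 0) := by
  induction n with
  | zero =>
    have h : rootedPeriodDvdPerms d 1 (0 : Fin 1) = Set.univ :=
      Set.eq_univ_of_forall fun π => ⟨fun x hx => (hx (Subsingleton.elim 0 x ▸ .refl π 0)).elim,
        by rw [minimalPeriod_eq_one_of_subsingleton]⟩
    simp [h]
  | succ n ih =>
    rw [card_rootedPeriodDvdPerms_fin_succ, ih, prod_range_succ _ (n + 1)]
    split_ifs with h
    · rw [fd_succ_eq_card_rootedPeriodDvdPerms, rootedPeriodDvdPerms_congr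
        (Nat.modEq_zero_iff_dvd.mpr h).symm, ih]
      ring
    · ring

theorem fd_eq_prod_range {d n : ℕ} (h : d ∣ n) :
    fd d n = ∏ k ∈ range n, (k + if d ∣ k then 1 else 0) := by
  cases n with
  | zero => exact fd_zero d
  | succ n =>
    rw [fd_succ_eq_card_rootedPeriodDvdPerms, rootedPeriodDvdPerms_congr
      (Nat.modEq_zero_iff_dvd.mpr h).symm, card_rootedPeriodDvdPerms_fin_self]

theorem Finset.filter_dvd_Ico_one_mul {d : ℕ} (hd : 0 < d) (m : ℕ) :
    (Ico 1 (d * m)).filter (d ∣ ·) = (Icc 1 (m - 1)).image (· * d) := by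
  ext k
  simp only [mem_filter, mem_Ico, mem_image, mem_Icc]
  constructor
  · rintro ⟨⟨hk1, hkm⟩, j, rfl⟩
    have hj : 0 < j := Nat.pos_of_mul_pos_left hk1
    have hjm : j < m := Nat.lt_of_mul_lt_mul_left hkm
    exact ⟨j, ⟨hj, by omega⟩, mul_comm j d⟩
  · rintro ⟨j, ⟨hj1, hjm⟩, rfl⟩
    refine ⟨⟨Nat.mul_pos hj1 hd, ?_⟩, dvd_mul_left d j⟩
    rw [mul_comm]
    exact Nat.mul_lt_mul_of_pos_left (by omega) hd

theorem cast_prod_range_add_ite_dvd {d n : ℕ} (h : d ∣ n) :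
    ((∏ k ∈ range n, (k + if d ∣ k then 1 else 0) : ℕ) : ℝ) =
      ((n - 1).factorial : ℝ) * ∏ j ∈ Icc 1 (n / d - 1), (1 + 1 / ((j : ℝ) * d)) := by
  rcases n.eq_zero_or_pos with rfl | hn
  · simp
  have hd : 0 < d := Nat.pos_of_dvd_of_pos h hn
  have hsplit : ∀ k ∈ Ico 1 n, ((k : ℝ) + if d ∣ k then 1 else 0) =
      k * if d ∣ k then 1 + 1 / (k : ℝ) else 1 := by
    intro k hk
    have hk0 : (k : ℝ) ≠ 0 := Nat.cast_ne_zero.mpr (Nat.one_le_iff_ne_zero.mp (mem_Ico.mp hk).1)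
    split_ifs
    · field_simp
    · simp
  have hfact : ∏ k ∈ Ico 1 n, (k : ℝ) = ((n - 1).factorial : ℝ) := by
    rw [← Nat.cast_prod, ← prod_Ico_id_eq_factorial, Nat.sub_add_cancel hn]
  obtain ⟨m, rfl⟩ := h
  push_cast
  rw [range_eq_Ico, prod_eq_prod_Ico_succ_bot hn, prod_congr rfl hsplit, prod_mul_distrib, hfact,
    ← prod_filter, filter_dvd_Ico_one_mul hd,
    prod_image fun i _ j _ hij => Nat.eq_of_mul_eq_mul_right hd hij, Nat.mul_div_cancel_left m hd]
  simp

theorem stmt_2_general (d n : ℕ) (hdn : d ∣ n) :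
    (fd d n : ℝ) =
      ((n - 1).factorial : ℝ) * ∏ j ∈ Finset.Icc 1 (n / d - 1), (1 + 1 / ((j : ℝ) * d)) := by
  rw [fd_eq_prod_range hdn, cast_prod_range_add_ite_dvd hdn]

theorem stmt_2 (d n : ℕ) (hd : 2 ≤ d) (hdn : d ∣ n) (hn : 0 < n) :
    (fd d n : ℝ) =
      ((n - 1).factorial : ℝ) * ∏ j ∈ Finset.Icc 1 (n / d - 1), (1 + 1 / ((j : ℝ) * d)) :=
  stmt_2_general d n hdn
end

section
/- Let X_1,…,X_k be independent Poisson random variables with E X_j = 1/j, set S(X) = Σ_{j=1}^k j·X_j, and let L_m(c) be the set of attainable m-tuples of weighted row sums of nonnegative integer matrices with column sums c. For each fixed r ≥ 1 and m ≥ 1 there is a constant C(r,m) with E[|L_m(X)|·S(X)^r] ≤ C(r,m)·k^r·E|L_m(X)|. -/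
/-- `Lset m k c` is the set of `m`-tuples `(∑ j, j * x i j)_i` (with `j` ranging over
`1, …, k`) as `x` ranges over `m × k` matrices of nonnegative integers whose `j`-th
column sums to `c j`. -/
def Lset (m k : ℕ) (c : Fin k → ℕ) : Set (Fin m → ℕ) :=
  {v | ∃ x : Fin m → Fin k → ℕ,
        (∀ j, ∑ i, x i j = c j) ∧ ∀ i, v i = ∑ j, (j.val + 1) * x i j}

/-- The Poisson probability mass function with mean `μ`. -/
noncomputable def poissonP (μ : ℝ) (r : ℕ) : ℝ :=
  Real.exp (-μ) * μ ^ r / r.factorial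

/-- The expectation of `f (X 1, …, X k)` where `X 1, …, X k` are independent
Poisson random variables with `E (X j) = 1 / j`.  (The variable indexed by
`j : Fin k` is Poisson with mean `1 / (j + 1)`.) -/
noncomputable def pexp (k : ℕ) (f : (Fin k → ℕ) → ℝ) : ℝ :=
  ∑' c : Fin k → ℕ, (∏ j : Fin k, poissonP (1 / ((j : ℕ) + 1 : ℝ)) (c j)) * f c

/-! The Poisson identity `E[X_j g(X)] = μ_j E[g(X + e_j)]` with `μ_j = 1/j` turns `E[S · g(X)]`
into `∑_j E[g(X + e_j)]`. Raising the `j`-th column sum by one shifts each attainable tuple by `j`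
in a single row, so `|L_m(c + e_j)| ≤ m |L_m(c)|`, while `S` grows by at most `k`. For
`Φ_r = E[|L_m(X)| S^r]` this gives
`Φ_{r+1} ≤ k m E[|L_m(X)| (S + k)^r] ≤ k m 2^(r-1) (Φ_r + k^r Φ_0)`, and induction on `r` gives
`Φ_r ≤ C k^r Φ_0`. The expectations are taken in `ℝ≥0∞`; passing back to `ℝ` needs `Φ_0 < ∞`,
which holds because `|L_m(c)| ≤ (S + 1)^m ≤ 2^(m S)` and Poisson variables have finite
exponential moments. -/

open Finset
open scoped ENNReal NNReal

lemma poissonP_nonneg {μ : ℝ} (hμ : 0 ≤ μ) (n : ℕ) : 0 ≤ poissonP μ n := by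
  unfold poissonP
  positivity

lemma poissonP_succ_mul (μ : ℝ) (n : ℕ) :
    poissonP μ (n + 1) * (n + 1) = μ * poissonP μ n := by
  unfold poissonP
  rw [pow_succ, Nat.factorial_succ]
  push_cast
  field_simp

lemma summable_poissonP_mul_pow (μ t : ℝ) : Summable fun n => poissonP μ n * t ^ n := by
  have h : (fun n => poissonP μ n * t ^ n) =
      fun n => Real.exp (-μ) * ((μ * t) ^ n / n.factorial) := by
    ext n
    simp only [poissonP, mul_pow]
    ring
  rw [h]
  exact (Real.summable_pow_div_factorial _).mul_left _

lemma ENNReal.tsum_pi_prod_eq_prod_tsum {α : Type*} :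
    ∀ (k : ℕ) (q : Fin k → α → ℝ≥0∞), ∑' c : Fin k → α, ∏ j, q j (c j) = ∏ j, ∑' a, q j a
  | 0, q => by simp
  | k + 1, q => by
    rw [← (Fin.consEquiv fun _ => α).tsum_eq, ENNReal.tsum_prod', Fin.prod_univ_succ,
      ← tsum_pi_prod_eq_prod_tsum k, ← ENNReal.tsum_mul_right]
    simp [Fin.consEquiv, Fin.prod_univ_succ, ENNReal.tsum_mul_left]

lemma Pi.single_le_iff {ι β : Type*} [DecidableEq ι] [AddCommMonoid β] [PartialOrder β]
    [CanonicallyOrderedAdd β] {i : ι} {a : β} {f : ι → β} : Pi.single i a ≤ f ↔ a ≤ f i := by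
  refine ⟨fun h => by simpa using h i, fun h i' => ?_⟩
  rcases eq_or_ne i' i with rfl | h' <;> simp [*]

section PoissonWeight

variable {ι : Type*} [Fintype ι] (μ : ι → ℝ)

noncomputable def poissonWeight (c : ι → ℕ) : ℝ≥0∞ :=
  ∏ i, ENNReal.ofReal (poissonP (μ i) (c i))

lemma toReal_poissonWeight (hμ : ∀ i, 0 ≤ μ i) (c : ι → ℕ) :
    (poissonWeight μ c).toReal = ∏ i, poissonP (μ i) (c i) := by
  simp only [poissonWeight, ENNReal.toReal_prod, ENNReal.toReal_ofReal (poissonP_nonneg (hμ _) _)]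

lemma poissonWeight_ne_top (c : ι → ℕ) : poissonWeight μ c ≠ ∞ :=
  ENNReal.prod_ne_top fun _ _ => ENNReal.ofReal_ne_top

variable [DecidableEq ι] {μ}

lemma poissonWeight_add_single_mul {j : ι} (hμ : 0 ≤ μ j) (c : ι → ℕ) :
    poissonWeight μ (c + Pi.single j 1) * (c j + 1) =
      ENNReal.ofReal (μ j) * poissonWeight μ c := by
  have hrest : ∏ i ∈ {j}ᶜ, ENNReal.ofReal (poissonP (μ i) ((c + Pi.single j 1 : ι → ℕ) i)) =
      ∏ i ∈ {j}ᶜ, ENNReal.ofReal (poissonP (μ i) (c i)) :=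
    prod_congr rfl fun i hi => by simp_all
  have hsucc : ENNReal.ofReal (poissonP (μ j) (c j + 1)) * (c j + 1) =
      ENNReal.ofReal (μ j) * ENNReal.ofReal (poissonP (μ j) (c j)) := by
    rw [← ENNReal.ofReal_mul hμ, ← poissonP_succ_mul, ENNReal.ofReal_mul (poissonP_nonneg hμ _)]
    norm_cast
  simp only [poissonWeight, Fintype.prod_eq_mul_prod_compl j]
  rw [hrest, Pi.add_apply, Pi.single_eq_same, mul_right_comm, hsucc, mul_assoc]

lemma tsum_poissonWeight_mul_apply_mul {j : ι} (hμ : 0 ≤ μ j) (g : (ι → ℕ) → ℝ≥0∞) :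
    ∑' c, poissonWeight μ c * (c j * g c) =
      ENNReal.ofReal (μ j) * ∑' c, poissonWeight μ c * g (c + Pi.single j 1) := by
  have hsupp : (Function.support fun c => poissonWeight μ c * (c j * g c)) ⊆
      Set.range (· + (Pi.single j 1 : ι → ℕ)) := by
    intro c hc
    have hcj : c j ≠ 0 := fun h => hc (by simp [h])
    exact ⟨c - Pi.single j 1,
      tsub_add_cancel_of_le (Pi.single_le_iff.2 (Nat.one_le_iff_ne_zero.2 hcj))⟩
  rw [← (add_left_injective _).tsum_eq hsupp, ← ENNReal.tsum_mul_left]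
  refine tsum_congr fun c => ?_
  rw [Pi.add_apply, Pi.single_eq_same, Nat.cast_add_one, ← mul_assoc,
    poissonWeight_add_single_mul hμ, mul_assoc]

end PoissonWeight

lemma tsum_poissonWeight_mul_prod_pow_ne_top {k : ℕ} {μ : Fin k → ℝ} (hμ : ∀ i, 0 ≤ μ i)
    (t : Fin k → ℝ≥0) : ∑' c, poissonWeight μ c * ∏ i, (t i : ℝ≥0∞) ^ c i ≠ ∞ := by
  simp only [poissonWeight, ← prod_mul_distrib]
  rw [ENNReal.tsum_pi_prod_eq_prod_tsum k
    fun i n => ENNReal.ofReal (poissonP (μ i) n) * (t i : ℝ≥0∞) ^ n]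
  refine ENNReal.prod_ne_top fun i _ => ?_
  have h (n : ℕ) : ENNReal.ofReal (poissonP (μ i) n) * (t i : ℝ≥0∞) ^ n =
      ENNReal.ofReal (poissonP (μ i) n * (t i : ℝ) ^ n) := by
    rw [ENNReal.ofReal_mul (poissonP_nonneg (hμ i) n), ← ENNReal.ofReal_coe_nnreal,
      ENNReal.ofReal_pow (by positivity)]
  simp only [h]
  rw [← ENNReal.ofReal_tsum_of_nonneg (fun n => by have := poissonP_nonneg (hμ i) n; positivity)
    (summable_poissonP_mul_pow _ _)]
  exact ENNReal.ofReal_ne_top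

section Lset

variable {m k : ℕ}

def weightedSum (c : Fin k → ℕ) : ℕ := ∑ j, (j.val + 1) * c j

lemma weightedSum_add (a b : Fin k → ℕ) :
    weightedSum (a + b) = weightedSum a + weightedSum b := by
  simp only [weightedSum, Pi.add_apply, mul_add, sum_add_distrib]

lemma weightedSum_single (j : Fin k) (n : ℕ) :
    weightedSum (Pi.single j n) = (j.val + 1) * n := by
  simp [weightedSum, Pi.single_apply]

lemma mem_Lset_iff {c : Fin k → ℕ} {v : Fin m → ℕ} :
    v ∈ Lset m k c ↔ ∃ x : Fin m → Fin k → ℕ, ∑ i, x i = c ∧ v = fun i => weightedSum (x i) := by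
  simp [Lset, funext_iff, Finset.sum_apply, weightedSum]

lemma weightedSum_mono : Monotone (weightedSum (k := k)) :=
  fun _ _ h => sum_le_sum fun j _ => Nat.mul_le_mul_left _ (h j)

lemma le_weightedSum_of_mem_Lset {c : Fin k → ℕ} {v : Fin m → ℕ} (hv : v ∈ Lset m k c)
    (i : Fin m) : v i ≤ weightedSum c := by
  obtain ⟨x, rfl, rfl⟩ := mem_Lset_iff.1 hv
  exact weightedSum_mono (single_le_sum (fun i _ => zero_le) (mem_univ i))

lemma sum_add_single_single (x : Fin m → Fin k → ℕ) (i : Fin m) (j : Fin k) :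
    ∑ i', (x + Pi.single i (Pi.single j 1) : Fin m → Fin k → ℕ) i' =
      ∑ i', x i' + Pi.single j 1 := by
  simp [sum_add_distrib]

lemma weightedSum_add_single_single (x : Fin m → Fin k → ℕ) (i : Fin m) (j : Fin k) :
    (fun i' => weightedSum ((x + Pi.single i (Pi.single j 1) : Fin m → Fin k → ℕ) i')) =
      (fun i' => weightedSum (x i')) + Pi.single i (j.val + 1) := by
  ext i'
  rcases eq_or_ne i' i with rfl | h <;> simp [weightedSum_add, weightedSum_single, *]

lemma add_single_mem_Lset {c : Fin k → ℕ} {v : Fin m → ℕ} (hv : v ∈ Lset m k c) (i : Fin m)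
    (j : Fin k) : v + Pi.single i (j.val + 1) ∈ Lset m k (c + Pi.single j 1) := by
  obtain ⟨x, rfl, rfl⟩ := mem_Lset_iff.1 hv
  exact mem_Lset_iff.2 ⟨_, sum_add_single_single x i j, (weightedSum_add_single_single x i j).symm⟩

lemma exists_add_single_eq_of_mem_Lset {c : Fin k → ℕ} {j : Fin k} {w : Fin m → ℕ}
    (hw : w ∈ Lset m k (c + Pi.single j 1)) :
    ∃ i : Fin m, ∃ v ∈ Lset m k c, v + Pi.single i (j.val + 1) = w := by
  obtain ⟨x, hx, rfl⟩ := mem_Lset_iff.1 hw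
  obtain ⟨i, -, hi⟩ : ∃ i ∈ univ, x i j ≠ 0 := exists_ne_zero_of_sum_ne_zero <| by
    rw [← Finset.sum_apply, hx]
    simp
  obtain ⟨y, rfl⟩ : ∃ y, x = y + Pi.single i (Pi.single j 1) :=
    ⟨x - Pi.single i (Pi.single j 1), (tsub_add_cancel_of_le
      (Pi.single_le_iff.2 (Pi.single_le_iff.2 (Nat.one_le_iff_ne_zero.2 hi)))).symm⟩
  rw [sum_add_single_single] at hx
  exact ⟨i, _, mem_Lset_iff.2 ⟨y, add_right_cancel hx, rfl⟩,
    (weightedSum_add_single_single y i j).symm⟩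

lemma Lset_subset_Iic (c : Fin k → ℕ) : Lset m k c ⊆ Set.Iic fun _ => weightedSum c :=
  fun _ hv i => le_weightedSum_of_mem_Lset hv i

lemma finite_Lset (c : Fin k → ℕ) : (Lset m k c).Finite :=
  (Set.finite_Iic _).subset (Lset_subset_Iic c)

lemma card_Lset_le (c : Fin k → ℕ) : Nat.card (Lset m k c) ≤ (weightedSum c + 1) ^ m := by
  calc Nat.card (Lset m k c) ≤ Nat.card (Set.Iic fun _ : Fin m => weightedSum c) :=
        Nat.card_mono (Set.finite_Iic _) (Lset_subset_Iic c)
    _ = (weightedSum c + 1) ^ m := by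
        rw [← coe_Iic, Nat.card_coe_set_eq, Set.ncard_coe_finset, Pi.card_Iic]
        simp

lemma card_Lset_add_single_le (c : Fin k → ℕ) (j : Fin k) :
    Nat.card (Lset m k (c + Pi.single j 1)) ≤ m * Nat.card (Lset m k c) := by
  have := (finite_Lset (m := m) c).to_subtype
  calc Nat.card (Lset m k (c + Pi.single j 1)) ≤ Nat.card (Fin m × Lset m k c) := by
        refine Nat.card_le_card_of_surjective
          (fun p => ⟨p.2.1 + Pi.single p.1 (j.val + 1), add_single_mem_Lset p.2.2 p.1 j⟩) ?_
        rintro ⟨w, hw⟩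
        obtain ⟨i, v, hv, rfl⟩ := exists_add_single_eq_of_mem_Lset hw
        exact ⟨(i, ⟨v, hv⟩), rfl⟩
    _ = m * Nat.card (Lset m k c) := by simp

lemma card_Lset_le_prod_pow (c : Fin k → ℕ) :
    Nat.card (Lset m k c) ≤ ∏ j : Fin k, (2 ^ ((j.val + 1) * m)) ^ c j := by
  calc Nat.card (Lset m k c) ≤ (weightedSum c + 1) ^ m := card_Lset_le c
    _ ≤ (2 ^ weightedSum c) ^ m := Nat.pow_le_pow_left Nat.lt_two_pow_self m
    _ = ∏ j : Fin k, (2 ^ ((j.val + 1) * m)) ^ c j := by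
        rw [weightedSum, ← prod_pow_eq_pow_sum, ← prod_pow]
        exact prod_congr rfl fun j _ => by ring

end Lset

section Moments

variable {k : ℕ}

noncomputable def harmonicMeans (k : ℕ) (j : Fin k) : ℝ := 1 / ((j : ℕ) + 1 : ℝ)

lemma harmonicMeans_nonneg (j : Fin k) : 0 ≤ harmonicMeans k j := by
  unfold harmonicMeans
  positivity

lemma natCast_add_one_mul_harmonicMeans (j : Fin k) :
    (((j : ℕ) + 1 : ℕ) : ℝ≥0∞) * ENNReal.ofReal (harmonicMeans k j) = 1 := by
  rw [← ENNReal.ofReal_natCast, harmonicMeans, Nat.cast_add_one,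
    ← ENNReal.ofReal_mul (by positivity), mul_one_div_cancel (by positivity), ENNReal.ofReal_one]

lemma tsum_poissonWeight_mul_weightedSum_mul (g : (Fin k → ℕ) → ℝ≥0∞) :
    ∑' c, poissonWeight (harmonicMeans k) c * (weightedSum c * g c) =
      ∑ j, ∑' c, poissonWeight (harmonicMeans k) c * g (c + Pi.single j 1) := by
  simp only [weightedSum, Nat.cast_sum, Nat.cast_mul, sum_mul, mul_sum]
  rw [Summable.tsum_finsetSum fun _ _ => ENNReal.summable]
  refine sum_congr rfl fun j _ => ?_
  simp only [mul_assoc, mul_left_comm (poissonWeight _ _) (((j : ℕ) + 1 : ℕ) : ℝ≥0∞)]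
  rw [ENNReal.tsum_mul_left, tsum_poissonWeight_mul_apply_mul (harmonicMeans_nonneg j), ← mul_assoc,
    natCast_add_one_mul_harmonicMeans, one_mul]

noncomputable def lsetMoment (m k r : ℕ) : ℝ≥0∞ :=
  ∑' c, poissonWeight (harmonicMeans k) c * (Nat.card (Lset m k c) * (weightedSum c : ℝ≥0∞) ^ r)

lemma weightedSum_add_single_le (c : Fin k → ℕ) (j : Fin k) :
    weightedSum (c + Pi.single j 1) ≤ weightedSum c + k := by
  rw [weightedSum_add, weightedSum_single]
  have := j.isLt
  omega

lemma lsetMoment_succ_le_tsum (m k r : ℕ) :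
    lsetMoment m k (r + 1) ≤ k * m * ∑' c, poissonWeight (harmonicMeans k) c *
      (Nat.card (Lset m k c) * ((weightedSum c : ℝ≥0∞) + k) ^ r) := by
  have hL (c : Fin k → ℕ) (j : Fin k) : (Nat.card (Lset m k (c + Pi.single j 1)) : ℝ≥0∞) ≤
      m * Nat.card (Lset m k c) := by exact_mod_cast card_Lset_add_single_le c j
  have hS (c : Fin k → ℕ) (j : Fin k) : (weightedSum (c + Pi.single j 1) : ℝ≥0∞) ≤
      weightedSum c + k := by exact_mod_cast weightedSum_add_single_le c j
  calc lsetMoment m k (r + 1)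
      = ∑ j : Fin k, ∑' c, poissonWeight (harmonicMeans k) c *
          (Nat.card (Lset m k (c + Pi.single j 1)) *
            (weightedSum (c + Pi.single j 1) : ℝ≥0∞) ^ r) := by
        rw [lsetMoment, ← tsum_poissonWeight_mul_weightedSum_mul fun c =>
          Nat.card (Lset m k c) * (weightedSum c : ℝ≥0∞) ^ r]
        exact tsum_congr fun c => by ring
    _ ≤ ∑ j : Fin k, ∑' c, poissonWeight (harmonicMeans k) c *
          (m * Nat.card (Lset m k c) * ((weightedSum c : ℝ≥0∞) + k) ^ r) := by
        gcongr with j _ c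
        exacts [hL c j, hS c j]
    _ = k * m * ∑' c, poissonWeight (harmonicMeans k) c *
          (Nat.card (Lset m k c) * ((weightedSum c : ℝ≥0∞) + k) ^ r) := by
        simp only [sum_const, card_univ, Fintype.card_fin, nsmul_eq_mul, ← ENNReal.tsum_mul_left]
        exact tsum_congr fun c => by ring

lemma tsum_card_Lset_mul_add_pow_le (m k r : ℕ) :
    ∑' c, poissonWeight (harmonicMeans k) c *
      (Nat.card (Lset m k c) * ((weightedSum c : ℝ≥0∞) + k) ^ r) ≤
      2 ^ (r - 1) * (lsetMoment m k r + k ^ r * lsetMoment m k 0) := by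
  calc _ ≤ ∑' c, poissonWeight (harmonicMeans k) c *
        (Nat.card (Lset m k c) * (2 ^ (r - 1) * ((weightedSum c : ℝ≥0∞) ^ r + k ^ r))) := by
        gcongr with c
        exact_mod_cast add_pow_le (Nat.zero_le (weightedSum c)) (Nat.zero_le k) r
    _ = 2 ^ (r - 1) * (lsetMoment m k r + k ^ r * lsetMoment m k 0) := by
        simp only [lsetMoment, pow_zero, mul_one, ← ENNReal.tsum_mul_left, ← ENNReal.tsum_add]
        exact tsum_congr fun c => by ring

lemma lsetMoment_succ_le (m k r : ℕ) :
    lsetMoment m k (r + 1) ≤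
      k * m * (2 ^ (r - 1) * (lsetMoment m k r + k ^ r * lsetMoment m k 0)) :=
  (lsetMoment_succ_le_tsum m k r).trans (by gcongr; exact tsum_card_Lset_mul_add_pow_le m k r)

def momentConst (m : ℕ) : ℕ → ℕ
  | 0 => 1
  | r + 1 => m * 2 ^ (r - 1) * (momentConst m r + 1)

lemma lsetMoment_le (m k r : ℕ) :
    lsetMoment m k r ≤ momentConst m r * k ^ r * lsetMoment m k 0 := by
  induction r with
  | zero => simp [momentConst]
  | succ r ih =>
    calc lsetMoment m k (r + 1)
        ≤ k * m * (2 ^ (r - 1) * (momentConst m r * k ^ r * lsetMoment m k 0 +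
            k ^ r * lsetMoment m k 0)) := (lsetMoment_succ_le m k r).trans (by gcongr)
      _ = momentConst m (r + 1) * k ^ (r + 1) * lsetMoment m k 0 := by
        simp only [momentConst]
        push_cast
        ring

lemma lsetMoment_zero_ne_top (m k : ℕ) : lsetMoment m k 0 ≠ ∞ := by
  refine ne_top_of_le_ne_top (tsum_poissonWeight_mul_prod_pow_ne_top harmonicMeans_nonneg
    fun j => 2 ^ ((j.val + 1) * m)) (ENNReal.tsum_le_tsum fun c => ?_)
  rw [pow_zero, mul_one]
  gcongr
  exact_mod_cast card_Lset_le_prod_pow c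

lemma pexp_eq_toReal_tsum (F : (Fin k → ℕ) → ℝ≥0∞) (hF : ∀ c, F c ≠ ∞) :
    pexp k (fun c => (F c).toReal) =
      (∑' c, poissonWeight (harmonicMeans k) c * F c).toReal := by
  rw [ENNReal.tsum_toReal_eq fun c => ENNReal.mul_ne_top (poissonWeight_ne_top _ c) (hF c), pexp]
  refine tsum_congr fun c => ?_
  rw [ENNReal.toReal_mul, toReal_poissonWeight _ harmonicMeans_nonneg]
  rfl

lemma pexp_card_Lset_mul_pow (m k r : ℕ) :
    pexp k (fun c => (Nat.card (Lset m k c) : ℝ) * (∑ j : Fin k, ((j : ℕ) + 1 : ℝ) * c j) ^ r) =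
      (lsetMoment m k r).toReal := by
  rw [lsetMoment, ← pexp_eq_toReal_tsum _ fun c => by finiteness]
  congr 1
  ext c
  simp only [ENNReal.toReal_mul, ENNReal.toReal_pow, ENNReal.toReal_natCast, weightedSum]
  push_cast
  rfl

end Moments

theorem stmt_12_general (r m : ℕ) :
    ∃ C : ℝ, 0 < C ∧ ∀ k : ℕ, 1 ≤ k →
      pexp k (fun c => (Nat.card (Lset m k c) : ℝ) *
          (∑ j : Fin k, ((j : ℕ) + 1 : ℝ) * c j) ^ r) ≤
        C * (k : ℝ) ^ r * pexp k (fun c => (Nat.card (Lset m k c) : ℝ)) := by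
  refine ⟨momentConst m r + 1, by positivity, fun k _ => ?_⟩
  have hcard : pexp k (fun c => (Nat.card (Lset m k c) : ℝ)) = (lsetMoment m k 0).toReal := by
    simpa using pexp_card_Lset_mul_pow m k 0
  rw [pexp_card_Lset_mul_pow, hcard]
  have hbound : lsetMoment m k r ≤ (momentConst m r + 1 : ℝ≥0∞) * k ^ r * lsetMoment m k 0 :=
    (lsetMoment_le m k r).trans (by gcongr; exact le_self_add)
  calc (lsetMoment m k r).toReal
      ≤ ((momentConst m r + 1 : ℝ≥0∞) * k ^ r * lsetMoment m k 0).toReal :=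
        ENNReal.toReal_mono (by finiteness [lsetMoment_zero_ne_top m k]) hbound
    _ = (momentConst m r + 1 : ℝ) * k ^ r * (lsetMoment m k 0).toReal := by
        simp [ENNReal.toReal_mul, ENNReal.toReal_add]

theorem stmt_12 (r m : ℕ) (hr : 1 ≤ r) (hm : 1 ≤ m) :
    ∃ C : ℝ, 0 < C ∧ ∀ k : ℕ, 1 ≤ k →
      pexp k (fun c => (Nat.card (Lset m k c) : ℝ) *
          (∑ j : Fin k, ((j : ℕ) + 1 : ℝ) * c j) ^ r) ≤
        C * (k : ℝ) ^ r * pexp k (fun c => (Nat.card (Lset m k c) : ℝ)) :=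
  stmt_12_general r m
end
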